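/- Let S₁ and S₂ be idempotent commutative semirings (i.e., x·x = x for all x). Then every ideal of S₁ × S₂ is directly decomposable. -/

import Mathlib

/-! An ideal `I` of `S₁ × S₂` always contains the product of its two axis slices
`{a | (a, 0) ∈ I}` and `{b | (0, b) ∈ I}`, since `(a, b) = (a, 0) + (0, b)`. Conversely, if
`(a, b) ∈ I` then `(a, b) * (a, 0) = (a * a, 0)` and `(a, b) * (0, b) = (0, b * b)` lie in `I`,
so with idempotent multiplication `I` is exactly that product. -/

/-- An ideal of a (possibly non-unital) commutative semiring. -/
def IsSemiringIdeal {S : Type*} [NonUnitalCommSemiring S] (I : Set S) : Prop :=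
  (0 : S) ∈ I ∧ (∀ a b : S, a ∈ I → b ∈ I → a + b ∈ I) ∧ (∀ a s : S, a ∈ I → a * s ∈ I)

namespace IsSemiringIdeal

variable {S₁ S₂ : Type*} [NonUnitalCommSemiring S₁] [NonUnitalCommSemiring S₂]
  {I : Set (S₁ × S₂)}

theorem fst_slice (hI : IsSemiringIdeal I) : IsSemiringIdeal {a : S₁ | ((a, 0) : S₁ × S₂) ∈ I} := by
  obtain ⟨h0, hadd, hmul⟩ := hI
  refine ⟨h0, fun a b ha hb => ?_, fun a s ha => ?_⟩
  · simpa using hadd _ _ ha hb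
  · simpa using hmul _ (s, 0) ha

theorem snd_slice (hI : IsSemiringIdeal I) : IsSemiringIdeal {b : S₂ | ((0, b) : S₁ × S₂) ∈ I} := by
  obtain ⟨h0, hadd, hmul⟩ := hI
  refine ⟨h0, fun a b ha hb => ?_, fun a s ha => ?_⟩
  · simpa using hadd _ _ ha hb
  · simpa using hmul _ (0, s) ha

theorem mk_mem_of_slices (hI : IsSemiringIdeal I) {a : S₁} {b : S₂}
    (ha : ((a, 0) : S₁ × S₂) ∈ I) (hb : ((0, b) : S₁ × S₂) ∈ I) : (a, b) ∈ I := by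
  simpa using hI.2.1 _ _ ha hb

theorem mk_zero_mem (hI : IsSemiringIdeal I) {a : S₁} {b : S₂} (ha : a * a = a)
    (h : (a, b) ∈ I) : ((a, 0) : S₁ × S₂) ∈ I := by
  simpa [ha] using hI.2.2 _ (a, 0) h

theorem zero_mk_mem (hI : IsSemiringIdeal I) {a : S₁} {b : S₂} (hb : b * b = b)
    (h : (a, b) ∈ I) : ((0, b) : S₁ × S₂) ∈ I := by
  simpa [hb] using hI.2.2 _ (0, b) h

theorem eq_prod_slices (hidem₁ : ∀ x : S₁, x * x = x) (hidem₂ : ∀ x : S₂, x * x = x)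
    (hI : IsSemiringIdeal I) :
    I = {a : S₁ | ((a, 0) : S₁ × S₂) ∈ I} ×ˢ {b : S₂ | ((0, b) : S₁ × S₂) ∈ I} := by
  ext ⟨a, b⟩
  exact ⟨fun h => ⟨hI.mk_zero_mem (hidem₁ a) h, hI.zero_mk_mem (hidem₂ b) h⟩,
    fun ⟨ha, hb⟩ => hI.mk_mem_of_slices ha hb⟩

end IsSemiringIdeal

theorem stmt_6 {S₁ S₂ : Type*} [NonUnitalCommSemiring S₁] [NonUnitalCommSemiring S₂]
    (hidem₁ : ∀ x : S₁, x * x = x) (hidem₂ : ∀ x : S₂, x * x = x)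
    (I : Set (S₁ × S₂)) (hI : IsSemiringIdeal I) :
    ∃ I₁ : Set S₁, ∃ I₂ : Set S₂,
      IsSemiringIdeal I₁ ∧ IsSemiringIdeal I₂ ∧ I = I₁ ×ˢ I₂ :=
  ⟨_, _, hI.fst_slice, hI.snd_slice, hI.eq_prod_slices hidem₁ hidem₂⟩
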